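/- arXiv:2109.11467 — 2 statements merged into one kernel-verified Lean document; each statement's English description precedes it below -/
import Mathlib

section
/- (1) There is a ℂ-algebra isomorphism φ : eE(S)e → e₀Se₀, uniquely determined by the property that (eDe)(f₀) = f₀ · φ(eDe) for every D ∈ E(S); (2) under this isomorphism, φ(eE(R,S)e) = e₀Re₀. -/
/-!
STATEMENT 5.  Let `W` be a finite group, `W_H ≤ W` a subgroup, and
`ℂW_H ⊆ R ⊆ S` inclusions of `ℂ`-algebras.  Let
`F(S) = {f : W → S | f(nw) = n f(w) for n ∈ W_H}`, a right `S`-module, and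
`E(S) = End_S(F(S))`; set `E(R,S) = {D ∈ E(S) | D(F(ℂW_H)) ⊆ F(R)}`.  Let
`e ∈ E(S)` be the averaging idempotent `e(f) = |W|⁻¹ ∑_u u·f` (where
`(u·f)(w) = f(wu)`), `e₀ = |W_H|⁻¹ ∑_{n∈W_H} n ∈ ℂW_H ⊆ S`, and `f₀ ∈ F(S)` the
constant function `f₀(w) = e₀`.

Theorem: (1) there is an algebra isomorphism `φ : eE(S)e → e₀Se₀`, uniquely
determined by `(eDe)(f₀) = f₀ · φ(eDe)` for all `D ∈ E(S)`;
(2) under this isomorphism `φ(eE(R,S)e) = e₀Re₀`.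
-/

noncomputable section
open scoped Classical
open MulOpposite

variable (W : Type) [Group W] [Fintype W] (WH : Subgroup W)
variable (S : Type) [Ring S] [Algebra ℂ S]
variable (ι : MonoidAlgebra ℂ ↥WH →ₐ[ℂ] S)

/-- `F(S)`: the `W_H`-equivariant functions `W → S`, a right `S`-module
(i.e. a module over `Sᵐᵒᵖ`). -/
def Fequiv : Submodule Sᵐᵒᵖ (W → S) where
  carrier := {f | ∀ (n : WH) (w : W),
    f ((n : W) * w) = ι (MonoidAlgebra.of ℂ WH n) * f w}
  add_mem' := by
    intro f g hf hg n w
    simp only [Pi.add_apply, hf n w, hg n w, mul_add]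
  zero_mem' := by
    intro n w
    simp
  smul_mem' := by
    intro c f hf n w
    simp only [Pi.smul_apply, MulOpposite.smul_eq_mul_unop, hf n w, mul_assoc]

/-- The averaging idempotent `e ∈ E(S) = End_S(F(S))`:
`(e f)(w) = |W|⁻¹ ∑_u f(wu)`. -/
def eE : Module.End Sᵐᵒᵖ ↥(Fequiv W WH S ι) where
  toFun f := ⟨fun w => algebraMap ℂ S ((Fintype.card W : ℂ)⁻¹) * ∑ u : W, f.1 (w * u),
    by
      intro n w
      have h1 : ∀ u : W, f.1 ((n : W) * w * u)
          = ι (MonoidAlgebra.of ℂ WH n) * f.1 (w * u) := by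
        intro u
        rw [mul_assoc]
        exact f.2 n (w * u)
      simp only [h1, ← Finset.mul_sum]
      rw [← mul_assoc, Algebra.commutes ((Fintype.card W : ℂ)⁻¹)
        (ι (MonoidAlgebra.of ℂ WH n)), mul_assoc]⟩
  map_add' f g := by
    apply Subtype.ext
    funext w
    show algebraMap ℂ S _ * ∑ u : W, (f.1 + g.1) (w * u) = _
    simp [Finset.sum_add_distrib, mul_add]
  map_smul' c f := by
    apply Subtype.ext
    funext w
    show algebraMap ℂ S _ * ∑ u : W, (c • f.1) (w * u) = _
    simp only [Pi.smul_apply, MulOpposite.smul_eq_mul_unop, ← Finset.sum_mul,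
      ← mul_assoc]
    rfl

/-- `e₀ = |W_H|⁻¹ ∑_{n ∈ W_H} n ∈ ℂW_H ⊆ S`. -/
def e0 : S :=
  algebraMap ℂ S ((Nat.card ↥WH : ℂ)⁻¹) * ∑ n : ↥WH, ι (MonoidAlgebra.of ℂ WH n)

/-- `f₀ ∈ F(S)`: the constant function with value `e₀`. -/
def f0 : ↥(Fequiv W WH S ι) :=
  ⟨fun _ => e0 W WH S ι, by
    intro n w
    show e0 W WH S ι = ι (MonoidAlgebra.of ℂ WH n) * e0 W WH S ι
    unfold e0
    have h1 : ι (MonoidAlgebra.of ℂ WH n) * (∑ m : ↥WH, ι (MonoidAlgebra.of ℂ WH m))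
        = ∑ m : ↥WH, ι (MonoidAlgebra.of ℂ WH m) := by
      rw [Finset.mul_sum]
      have h2 : ∀ m : ↥WH, ι (MonoidAlgebra.of ℂ WH n) * ι (MonoidAlgebra.of ℂ WH m)
          = ι (MonoidAlgebra.of ℂ WH (n * m)) := by
        intro m
        rw [← map_mul, ← map_mul]
      simp only [h2]
      exact Fintype.sum_equiv (Equiv.mulLeft n)
        (fun m => ι (MonoidAlgebra.of ℂ WH (n * m)))
        (fun m => ι (MonoidAlgebra.of ℂ WH m)) (fun m => rfl)
    rw [← mul_assoc, ← Algebra.commutes ((Nat.card ↥WH : ℂ)⁻¹)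
      (ι (MonoidAlgebra.of ℂ WH n)), mul_assoc, h1]⟩

/-- The corner `e E(S) e ⊆ E(S)`. -/
def cornerE : Set (Module.End Sᵐᵒᵖ ↥(Fequiv W WH S ι)) :=
  {X | ∃ D, X = eE W WH S ι * D * eE W WH S ι}

/-- `E(R,S) = {D ∈ E(S) | D(F(ℂW_H)) ⊆ F(R)}`. -/
def ERS (R : Subalgebra ℂ S) : Set (Module.End Sᵐᵒᵖ ↥(Fequiv W WH S ι)) :=
  {D | ∀ f : ↥(Fequiv W WH S ι), (∀ w, f.1 w ∈ Set.range ι) →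
    ∀ w, (D f).1 w ∈ R}

/-! ### Auxiliary lemmas -/

lemma smul_cancel_aux (n : ℕ) (hn : n ≠ 0) (c : S) :
    algebraMap ℂ S ((n : ℂ)⁻¹) * (n • c) = c := by
  rw [← Nat.cast_smul_eq_nsmul ℂ n c, ← Algebra.smul_def, smul_smul,
    inv_mul_cancel₀ (by exact_mod_cast hn), one_smul]

/-- `cval f = |W|⁻¹ ∑_v f(v)`, the "average value" of `f`. -/
def cval (f : ↥(Fequiv W WH S ι)) : S :=
  algebraMap ℂ S ((Fintype.card W : ℂ)⁻¹) * ∑ v : W, f.1 v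

lemma cval_const (f : ↥(Fequiv W WH S ι)) (c : S) (h : ∀ v, f.1 v = c) :
    cval W WH S ι f = c := by
  unfold cval
  simp only [h]
  rw [Finset.sum_const, Finset.card_univ]
  exact smul_cancel_aux S _ Fintype.card_ne_zero c

lemma iota_e0 (n : ↥WH) :
    ι (MonoidAlgebra.of ℂ WH n) * e0 W WH S ι = e0 W WH S ι :=
  ((f0 W WH S ι).2 n 1).symm

lemma avg_fix (c : S) (hc : ∀ n : ↥WH, ι (MonoidAlgebra.of ℂ WH n) * c = c) :
    e0 W WH S ι * c = c := by
  unfold e0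
  rw [mul_assoc, Finset.sum_mul]
  simp only [hc]
  rw [Finset.sum_const, Finset.card_univ, Nat.card_eq_fintype_card]
  exact smul_cancel_aux S _ Fintype.card_ne_zero c

lemma e0_idem : e0 W WH S ι * e0 W WH S ι = e0 W WH S ι :=
  avg_fix W WH S ι _ (iota_e0 W WH S ι)

lemma e0_cval (f : ↥(Fequiv W WH S ι)) :
    e0 W WH S ι * cval W WH S ι f = cval W WH S ι f := by
  unfold cval
  rw [← mul_assoc, ← Algebra.commutes ((Fintype.card W : ℂ)⁻¹) (e0 W WH S ι),
    mul_assoc]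
  congr 1
  apply avg_fix
  intro n
  rw [Finset.mul_sum]
  have h : ∑ v : W, ι (MonoidAlgebra.of ℂ WH n) * f.1 v
      = ∑ v : W, f.1 ((n : W) * v) :=
    Finset.sum_congr rfl fun v _ => (f.2 n v).symm
  rw [h]
  exact Fintype.sum_equiv (Equiv.mulLeft (n : W)) _ _ (fun v => rfl)

lemma eE_apply (f : ↥(Fequiv W WH S ι)) (w : W) :
    ((eE W WH S ι) f).1 w = cval W WH S ι f := by
  show algebraMap ℂ S ((Fintype.card W : ℂ)⁻¹) * ∑ u : W, f.1 (w * u) = _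
  unfold cval
  congr 1
  exact Fintype.sum_equiv (Equiv.mulLeft w) _ _ (fun u => rfl)

lemma smul_apply_aux (s : S) (f : ↥(Fequiv W WH S ι)) (w : W) :
    ((op s) • f).1 w = f.1 w * s := rfl

lemma eE_f0 : (eE W WH S ι) (f0 W WH S ι) = f0 W WH S ι := by
  apply Subtype.ext
  funext w
  exact (eE_apply W WH S ι _ w).trans (cval_const W WH S ι _ _ (fun v => rfl))

lemma eE_smul_f0 (f : ↥(Fequiv W WH S ι)) :
    (eE W WH S ι) f = op (cval W WH S ι f) • f0 W WH S ι := by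
  apply Subtype.ext
  funext v
  rw [eE_apply]
  exact (e0_cval W WH S ι f).symm

lemma corner_f0_apply (D : Module.End Sᵐᵒᵖ ↥(Fequiv W WH S ι)) (w : W) :
    ((eE W WH S ι * D * eE W WH S ι) (f0 W WH S ι)).1 w
      = cval W WH S ι (D (f0 W WH S ι)) := by
  show ((eE W WH S ι) (D ((eE W WH S ι) (f0 W WH S ι)))).1 w = _
  rw [eE_f0, eE_apply]

lemma corner_apply (D : Module.End Sᵐᵒᵖ ↥(Fequiv W WH S ι))
    (f : ↥(Fequiv W WH S ι)) (w : W) :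
    ((eE W WH S ι * D * eE W WH S ι) f).1 w
      = ((eE W WH S ι * D * eE W WH S ι) (f0 W WH S ι)).1 1 * cval W WH S ι f := by
  have h2 : (eE W WH S ι * D * eE W WH S ι) f
      = op (cval W WH S ι f) • ((eE W WH S ι) (D (f0 W WH S ι))) := by
    show (eE W WH S ι) (D ((eE W WH S ι) f)) = _
    rw [eE_smul_f0 W WH S ι f, map_smul, map_smul]
  rw [h2, smul_apply_aux, corner_f0_apply, eE_apply]

lemma char_prop (D : Module.End Sᵐᵒᵖ ↥(Fequiv W WH S ι)) :
    (eE W WH S ι * D * eE W WH S ι) (f0 W WH S ι)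
      = op (((eE W WH S ι * D * eE W WH S ι) (f0 W WH S ι)).1 1)
          • f0 W WH S ι := by
  apply Subtype.ext
  funext w
  rw [smul_apply_aux]
  show _ = e0 W WH S ι * _
  rw [corner_f0_apply, corner_f0_apply, e0_cval]

lemma phi_e0_left (D : Module.End Sᵐᵒᵖ ↥(Fequiv W WH S ι)) :
    e0 W WH S ι * ((eE W WH S ι * D * eE W WH S ι) (f0 W WH S ι)).1 1
      = ((eE W WH S ι * D * eE W WH S ι) (f0 W WH S ι)).1 1 := by
  rw [corner_f0_apply, e0_cval]

lemma phi_e0_right (D : Module.End Sᵐᵒᵖ ↥(Fequiv W WH S ι)) :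
    ((eE W WH S ι * D * eE W WH S ι) (f0 W WH S ι)).1 1 * e0 W WH S ι
      = ((eE W WH S ι * D * eE W WH S ι) (f0 W WH S ι)).1 1 := by
  have := corner_apply W WH S ι D (f0 W WH S ι) 1
  rw [cval_const W WH S ι (f0 W WH S ι) (e0 W WH S ι) (fun v => rfl)] at this
  exact this.symm

/-- `D_t : f ↦ (w ↦ e₀ t f(1))`, an `Sᵐᵒᵖ`-linear endomorphism of `F(S)`. -/
def Dt (t : S) : Module.End Sᵐᵒᵖ ↥(Fequiv W WH S ι) where
  toFun f := ⟨fun _ => e0 W WH S ι * t * f.1 1, by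
    intro n w
    show e0 W WH S ι * t * f.1 1 = ι (MonoidAlgebra.of ℂ WH n) * (e0 W WH S ι * t * f.1 1)
    rw [← mul_assoc, ← mul_assoc, iota_e0]⟩
  map_add' f g := by
    apply Subtype.ext
    funext w
    show e0 W WH S ι * t * (f.1 1 + g.1 1) = _
    rw [mul_add]
    rfl
  map_smul' s f := by
    apply Subtype.ext
    funext w
    show e0 W WH S ι * t * (f.1 1 * s.unop) = (e0 W WH S ι * t * f.1 1) * s.unop
    simp [mul_assoc]

lemma phi_Dt (t : S) :
    ((eE W WH S ι * Dt W WH S ι t * eE W WH S ι) (f0 W WH S ι)).1 1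
      = e0 W WH S ι * t * e0 W WH S ι := by
  rw [corner_f0_apply]
  exact cval_const W WH S ι _ _ (fun v => rfl)

lemma e0_eq_iota :
    e0 W WH S ι
      = ι (((Nat.card ↥WH : ℂ)⁻¹) • ∑ n : ↥WH, MonoidAlgebra.of ℂ WH n) := by
  rw [map_smul, Algebra.smul_def, map_sum]
  rfl

theorem corner_iso_and_ERS (R : Subalgebra ℂ S)
    (hι : Function.Injective ι)
    (hR : ∀ x : MonoidAlgebra ℂ ↥WH, ι x ∈ R) :
    ∃ φ : Module.End Sᵐᵒᵖ ↥(Fequiv W WH S ι) → S,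
      -- the characterising property `(eDe)(f₀) = f₀ · φ(eDe)`
      (∀ D, (eE W WH S ι * D * eE W WH S ι) (f0 W WH S ι)
          = op (φ (eE W WH S ι * D * eE W WH S ι)) • f0 W WH S ι) ∧
      -- (1) φ is an algebra isomorphism from `eE(S)e` onto `e₀Se₀`
      Set.BijOn φ (cornerE W WH S ι)
        {s : S | ∃ t : S, s = e0 W WH S ι * t * e0 W WH S ι} ∧
      (∀ X ∈ cornerE W WH S ι, ∀ Y ∈ cornerE W WH S ι,
        φ (X + Y) = φ X + φ Y ∧ φ (X * Y) = φ X * φ Y) ∧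
      φ (eE W WH S ι) = e0 W WH S ι ∧
      -- uniqueness of φ on the corner
      (∀ ψ : Module.End Sᵐᵒᵖ ↥(Fequiv W WH S ι) → S,
        (∀ D, (eE W WH S ι * D * eE W WH S ι) (f0 W WH S ι)
            = op (ψ (eE W WH S ι * D * eE W WH S ι)) • f0 W WH S ι) →
        (∀ X ∈ cornerE W WH S ι,
          ψ X ∈ {s : S | ∃ t : S, s = e0 W WH S ι * t * e0 W WH S ι}) →
        ∀ X ∈ cornerE W WH S ι, ψ X = φ X) ∧
      -- (2) `φ(e E(R,S) e) = e₀Re₀`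
      φ '' {X | ∃ D ∈ ERS W WH S ι R, X = eE W WH S ι * D * eE W WH S ι}
        = {s : S | ∃ t ∈ R, s = e0 W WH S ι * t * e0 W WH S ι} := by
  refine ⟨fun X => (X (f0 W WH S ι)).1 1, fun D => char_prop W WH S ι D,
    ⟨?_, ?_, ?_⟩, ?_, ?_, ?_, ?_⟩
  · -- MapsTo
    rintro X ⟨D, rfl⟩
    exact ⟨((eE W WH S ι * D * eE W WH S ι) (f0 W WH S ι)).1 1,
      by rw [phi_e0_left, phi_e0_right]⟩
  · -- InjOn
    rintro X ⟨D, rfl⟩ Y ⟨D', rfl⟩ h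
    apply LinearMap.ext
    intro f
    apply Subtype.ext
    funext w
    rw [corner_apply W WH S ι D f w, corner_apply W WH S ι D' f w]
    exact congrArg (· * cval W WH S ι f) h
  · -- SurjOn
    rintro s ⟨t, rfl⟩
    exact ⟨eE W WH S ι * Dt W WH S ι t * eE W WH S ι, ⟨Dt W WH S ι t, rfl⟩,
      phi_Dt W WH S ι t⟩
  · -- additivity + multiplicativity
    rintro X ⟨D, rfl⟩ Y ⟨D', rfl⟩
    refine ⟨rfl, ?_⟩
    have hY : ((eE W WH S ι * D' * eE W WH S ι) (f0 W WH S ι)).1 1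
        = cval W WH S ι (D' (f0 W WH S ι)) := corner_f0_apply W WH S ι D' 1
    have hXY : ((eE W WH S ι * D * eE W WH S ι)
          ((eE W WH S ι * D' * eE W WH S ι) (f0 W WH S ι))).1 1
        = ((eE W WH S ι * D * eE W WH S ι) (f0 W WH S ι)).1 1
          * cval W WH S ι ((eE W WH S ι * D' * eE W WH S ι) (f0 W WH S ι)) :=
      corner_apply W WH S ι D _ 1
    have hc : cval W WH S ι ((eE W WH S ι * D' * eE W WH S ι) (f0 W WH S ι))
        = cval W WH S ι (D' (f0 W WH S ι)) :=
      cval_const W WH S ι _ _ (fun v => corner_f0_apply W WH S ι D' v)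
    show ((eE W WH S ι * D * eE W WH S ι)
        ((eE W WH S ι * D' * eE W WH S ι) (f0 W WH S ι))).1 1
      = ((eE W WH S ι * D * eE W WH S ι) (f0 W WH S ι)).1 1
        * ((eE W WH S ι * D' * eE W WH S ι) (f0 W WH S ι)).1 1
    rw [hXY, hc, hY]
  · -- φ e = e₀
    show ((eE W WH S ι) (f0 W WH S ι)).1 1 = e0 W WH S ι
    rw [eE_f0]
    rfl
  · -- uniqueness
    rintro ψ hψ hmem X ⟨D, rfl⟩
    obtain ⟨u, hu⟩ := hmem _ ⟨D, rfl⟩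
    have h1 : e0 W WH S ι * ψ (eE W WH S ι * D * eE W WH S ι)
        = e0 W WH S ι
          * ((eE W WH S ι * D * eE W WH S ι) (f0 W WH S ι)).1 1 :=
      congrFun (congrArg Subtype.val
        ((hψ D).symm.trans (char_prop W WH S ι D))) 1
    calc ψ (eE W WH S ι * D * eE W WH S ι)
        = e0 W WH S ι * ψ (eE W WH S ι * D * eE W WH S ι) := by
          conv_rhs => rw [hu, ← mul_assoc, ← mul_assoc, e0_idem]
          rw [hu]
      _ = e0 W WH S ι
            * ((eE W WH S ι * D * eE W WH S ι) (f0 W WH S ι)).1 1 := h1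
      _ = ((eE W WH S ι * D * eE W WH S ι) (f0 W WH S ι)).1 1 :=
          phi_e0_left W WH S ι D
  · -- part (2)
    apply Set.Subset.antisymm
    · rintro s ⟨X, ⟨D, hD, rfl⟩, rfl⟩
      refine ⟨((eE W WH S ι * D * eE W WH S ι) (f0 W WH S ι)).1 1, ?_,
        by rw [phi_e0_left, phi_e0_right]⟩
      have hval : ((eE W WH S ι * D * eE W WH S ι) (f0 W WH S ι)).1 1
          = cval W WH S ι (D (f0 W WH S ι)) := corner_f0_apply W WH S ι D 1
      rw [hval]
      unfold cval
      rw [← Algebra.smul_def]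
      refine Subalgebra.smul_mem R (sum_mem fun v _ => ?_) _
      exact hD (f0 W WH S ι) (fun w => ⟨_, (e0_eq_iota W WH S ι).symm⟩) v
    · rintro s ⟨t, ht, rfl⟩
      refine ⟨eE W WH S ι * Dt W WH S ι t * eE W WH S ι,
        ⟨Dt W WH S ι t, ?_, rfl⟩, phi_Dt W WH S ι t⟩
      intro f hf w
      show e0 W WH S ι * t * f.1 1 ∈ R
      obtain ⟨x, hx⟩ := hf 1
      exact mul_mem (mul_mem (by rw [e0_eq_iota]; exact hR _) ht) (hx ▸ hR x)

end
end

section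
/- If R is a subalgebra of D(𝔥_reg)^W containing A_κ(W) such that the adjoint action of ℂ[∇] on R is locally nilpotent (for each r ∈ R there is n with ad(∇)^n(r) = 0), then R = A_κ(W). -/
/-!
STATEMENT 14.  Let `ℓ ≥ 1`, let `W = ⟨s⟩` be the cyclic group of order `ℓ` acting on
`𝔥 = ℂ` by a primitive `ℓ`-th root of unity `ω`; then `𝔥_reg = ℂ∖{0}` and
`ℂ[𝔥_reg] = ℂ[x,x⁻¹]`.  For a parameter `κ = (κ_0,…,κ_{ℓ-1})` the spherical
subalgebra `A_κ(W)` of the rational Cherednik algebra, realised inside the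
`W`-invariant differential operators `D(𝔥_reg)^W` on `ℂ[x,x⁻¹]` via the Dunkl
embedding, is the subalgebra generated by `z = x^ℓ`, `eu = x∂x` and
`∇ = x^{-ℓ} ∏_{i=0}^{ℓ-1} (x∂x + ℓκ_i + i + ℓ(δ_{i,0}-1))`.

Theorem: if `R` is a subalgebra of `D(𝔥_reg)^W` containing `A_κ(W)` such that the
adjoint action of `ℂ[∇]` on `R` is locally nilpotent, then `R = A_κ(W)`.
-/

noncomputable section
open LaurentPolynomial

/-- The Laurent polynomial ring `ℂ[x,x⁻¹] = ℂ[𝔥_reg]`. -/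
abbrev LaurentC := LaurentPolynomial ℂ

/-- Multiplication operator. -/
def mulOpL (r : LaurentC) : Module.End ℂ LaurentC := LinearMap.mulLeft ℂ r

/-- Grothendieck's inductive order filtration on differential operators. -/
def diffOpOrder : ℕ → Set (Module.End ℂ LaurentC)
  | 0 => {D | ∀ r : LaurentC, D * mulOpL r = mulOpL r * D}
  | n + 1 => {D | ∀ r : LaurentC, D * mulOpL r - mulOpL r * D ∈ diffOpOrder n}

/-- The action of the generator `s` of `W = ℤ/ℓℤ` on `ℂ[x,x⁻¹]`: `x^n ↦ ω^n x^n`. -/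
def wAction (ω : ℂ) : Module.End ℂ LaurentC :=
  (AddMonoidAlgebra.coeffLinearEquiv ℂ).symm.toLinearMap ∘ₗ
    Finsupp.lsum ℂ (fun n : ℤ => ((ω ^ n)) • Finsupp.lsingle n) ∘ₗ
    (AddMonoidAlgebra.coeffLinearEquiv ℂ).toLinearMap

/-- The `W`-invariant differential operators `D(𝔥_reg)^W` on `ℂ[x,x⁻¹]`. -/
def DregW (ω : ℂ) : Set (Module.End ℂ LaurentC) :=
  {D | (∃ n, D ∈ diffOpOrder n) ∧ Commute (wAction ω) D}

/-- The Euler operator `eu = x ∂_x` on `ℂ[x,x⁻¹]`. -/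
def euler : Module.End ℂ LaurentC :=
  (AddMonoidAlgebra.coeffLinearEquiv ℂ).symm.toLinearMap ∘ₗ
    Finsupp.lsum ℂ (fun n : ℤ => ((n : ℂ)) • Finsupp.lsingle n) ∘ₗ
    (AddMonoidAlgebra.coeffLinearEquiv ℂ).toLinearMap

/-- `z = x^ℓ`, acting by multiplication. -/
def zOp (ℓ : ℕ) : Module.End ℂ LaurentC := mulOpL (T (ℓ : ℤ))

/-- The `i`-th factor `x∂x + ℓκ_i + i + ℓ(δ_{i,0} - 1)` of `∇`. -/
def nablaFactor (ℓ : ℕ) (κ : ℕ → ℂ) (i : ℕ) : Module.End ℂ LaurentC :=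
  euler + ((ℓ : ℂ) * κ i + (i : ℂ) + (ℓ : ℂ) * ((if i = 0 then 1 else 0) - 1)) • 1

/-- The operator `∇ = x^{-ℓ} ∏_{i=0}^{ℓ-1} (x∂x + ℓκ_i + i + ℓ(δ_{i,0}-1))`. -/
def nabla (ℓ : ℕ) (κ : ℕ → ℂ) : Module.End ℂ LaurentC :=
  mulOpL (T (-(ℓ : ℤ))) * ((List.range ℓ).map (nablaFactor ℓ κ)).prod

/-- The spherical subalgebra `A_κ(W) ⊆ D(𝔥_reg)^W`, realised via the Dunkl
embedding: the subalgebra generated by `z`, `eu` and `∇`. -/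
def Arank1 (ℓ : ℕ) (κ : ℕ → ℂ) : Subalgebra ℂ (Module.End ℂ LaurentC) :=
  Algebra.adjoin ℂ {zOp ℓ, euler, nabla ℓ κ}

/-!
Every differential operator on `ℂ[x,x⁻¹]` is a finite sum of homogeneous pieces `x^d q(eu)`:
induct on the order, using that the commutator with `x` acts on `q` as a forward difference,
which is surjective on polynomials. `W`-invariance forces `ℓ ∣ d`, and since `ad eu` acts on the
degree `d` piece by `d`, every piece of an element of `R` lies in `R`. For `d = mℓ ≥ 0` the piece
is `z^m q(eu) ∈ A_κ`. For `d = -jℓ`, writing `∇ = x^(-ℓ) p(eu)`, we have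
`∇^j = x^(-jℓ) P_j(eu)` with `P_j = ∏_{i<j} p(X - iℓ)`, and `ad ∇` maps `x^(-jℓ) q(eu)` to
`x^(-(j+1)ℓ) (q · p(X - jℓ) - p · q(X - ℓ))(eu)`. If `P_{j+1}` divides this polynomial then
`P_j ∣ q`, by a descent on root multiplicities along `α, α - ℓ, α - 2ℓ, …`; so local nilpotence
of `ad ∇` gives `P_j ∣ q`, and the piece is `∇^j g(eu) ∈ A_κ`.
-/

namespace Polynomial

variable {K : Type*} [Field K]

theorem rootMultiplicity_comp_X_sub_C (p : K[X]) (s α : K) :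
    (p.comp (X - C s)).rootMultiplicity α = p.rootMultiplicity (α - s) := by
  simpa [sub_eq_add_neg] using rootMultiplicity_comp_C_mul_X_add_C p 1 (-s) α isUnit_one

theorem comp_X_sub_C_ne_zero {p : K[X]} (hp : p ≠ 0) (s : K) : p.comp (X - C s) ≠ 0 := by
  simpa [sub_eq_add_neg] using (comp_X_add_C_ne_zero_iff (t := -s)).mpr hp

theorem eq_zero_of_forall_eval_intCast_eq_zero [CharZero K] {q : K[X]}
    (h : ∀ n : ℤ, q.eval (n : K) = 0) : q = 0 :=
  eq_zero_of_infinite_isRoot q <|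
    Set.infinite_of_injective_forall_mem (f := fun n : ℤ => (n : K)) Int.cast_injective h

def shiftProd (p : K[X]) (s : K) (j : ℕ) : K[X] :=
  ∏ i ∈ Finset.range j, p.comp (X - C (i * s))

variable {p : K[X]} {s : K}

theorem shiftProd_ne_zero (hp : p ≠ 0) (s : K) (j : ℕ) : shiftProd p s j ≠ 0 :=
  Finset.prod_ne_zero_iff.mpr fun _ _ => comp_X_sub_C_ne_zero hp _

theorem shiftProd_succ (j : ℕ) :
    shiftProd p s (j + 1) = shiftProd p s j * p.comp (X - C (j * s)) :=
  Finset.prod_range_succ (fun i : ℕ => p.comp (X - C (i * s))) j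

theorem shiftProd_succ' (j : ℕ) :
    shiftProd p s (j + 1) = p * (shiftProd p s j).comp (X - C s) := by
  rw [shiftProd, Finset.prod_range_succ', shiftProd, prod_comp, mul_comm]
  simp [comp_assoc, add_mul, sub_sub, add_comm]

/-- One step of a descent along the orbit `α, α - s, α - 2s, …`. -/
theorem rootMultiplicity_lt_shiftProd_sub (hp : p ≠ 0) {j : ℕ} {q : K[X]} (hq : q ≠ 0)
    (hdvd : shiftProd p s (j + 1) ∣ q * p.comp (X - C (j * s)) - p * q.comp (X - C s))
    {α : K} (h : q.rootMultiplicity α < (shiftProd p s j).rootMultiplicity α) :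
    q.rootMultiplicity (α - s) < (shiftProd p s j).rootMultiplicity (α - s) := by
  set P := shiftProd p s (j + 1) with hP
  set a := q * p.comp (X - C (j * s))
  set b := p * q.comp (X - C s)
  have ha : a ≠ 0 := mul_ne_zero hq (comp_X_sub_C_ne_zero hp _)
  have hb : b ≠ 0 := mul_ne_zero hp (comp_X_sub_C_ne_zero hq _)
  have ha_lt : a.rootMultiplicity α < P.rootMultiplicity α := by
    rw [rootMultiplicity_mul ha, hP, shiftProd_succ,
      rootMultiplicity_mul (mul_ne_zero (shiftProd_ne_zero hp s j) (comp_X_sub_C_ne_zero hp _))]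
    omega
  have hdiff : (X - C α) ^ P.rootMultiplicity α ∣ a - b := (pow_rootMultiplicity_dvd _ α).trans hdvd
  have hb_lt : b.rootMultiplicity α < P.rootMultiplicity α := by
    by_contra! hle
    have hbP : (X - C α) ^ P.rootMultiplicity α ∣ b :=
      (pow_dvd_pow _ hle).trans (pow_rootMultiplicity_dvd b α)
    have haP : (X - C α) ^ P.rootMultiplicity α ∣ a := by simpa using dvd_add hdiff hbP
    exact ha_lt.not_ge ((le_rootMultiplicity_iff ha).mpr haP)
  rwa [rootMultiplicity_mul hb, rootMultiplicity_comp_X_sub_C, hP, shiftProd_succ',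
    rootMultiplicity_mul (mul_ne_zero hp (comp_X_sub_C_ne_zero (shiftProd_ne_zero hp s j) _)),
    rootMultiplicity_comp_X_sub_C, Nat.add_lt_add_iff_left] at hb_lt

theorem shiftProd_dvd_of_dvd_sub [IsAlgClosed K] [CharZero K] (hp : p ≠ 0) (hs : s ≠ 0)
    {j : ℕ} {q : K[X]}
    (hdvd : shiftProd p s (j + 1) ∣ q * p.comp (X - C (j * s)) - p * q.comp (X - C s)) :
    shiftProd p s j ∣ q := by
  classical
  rcases eq_or_ne q 0 with rfl | hq
  · exact dvd_zero _
  rw [IsAlgClosed.dvd_iff_roots_le_roots (shiftProd_ne_zero hp s j) hq, Multiset.le_iff_count]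
  intro α
  rw [count_roots, count_roots]
  by_contra! hlt
  have horbit (k : ℕ) :
      q.rootMultiplicity (α - k * s) < (shiftProd p s j).rootMultiplicity (α - k * s) := by
    induction k with
    | zero => simpa using hlt
    | succ k ih =>
      simpa [add_mul, sub_sub] using rootMultiplicity_lt_shiftProd_sub hp hq hdvd ih
  refine (finite_setOfPred_isRoot (shiftProd_ne_zero hp s j)).not_infinite
    (Set.infinite_of_injective_forall_mem (f := fun k : ℕ => α - k * s) ?_ fun k => ?_)
  · intro k k' h
    simpa [hs] using h
  · exact (rootMultiplicity_pos (shiftProd_ne_zero hp s j)).mp (Nat.zero_lt_of_lt (horbit k))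

theorem exists_comp_X_add_one_sub_eq [CharZero K] (q : K[X]) :
    ∃ Q : K[X], Q.comp (X + 1) - Q = q := by
  induction q using Polynomial.induction_on' with
  | add p q hp hq =>
    obtain ⟨P, hP⟩ := hp
    obtain ⟨Q, hQ⟩ := hq
    exact ⟨P + Q, by rw [add_comp, ← hP, ← hQ]; ring⟩
  | monomial n a =>
    -- Bernoulli polynomials satisfy `B_{n+1}(X + 1) - B_{n+1}(X) = (n + 1) X^n`.
    refine ⟨C (a / (n + 1)) * (Polynomial.bernoulli (n + 1)).map (algebraMap ℚ K), ?_⟩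
    have hB := congrArg (Polynomial.map (algebraMap ℚ K)) (bernoulli_comp_one_add_X (n + 1))
    simp only [map_comp, Polynomial.map_add, Polynomial.map_one, map_X,
      add_comm (1 : K[X]) X, add_tsub_cancel_right] at hB
    rw [mul_comp, C_comp, hB, ← mul_sub, add_sub_cancel_left, ← C_mul_X_pow_eq_monomial,
      nsmul_eq_mul, Polynomial.map_mul, Polynomial.map_pow, map_X, ← C_eq_natCast,
      Polynomial.map_C, ← mul_assoc, ← map_mul]
    congr 2
    have : (n : K) + 1 ≠ 0 := Nat.cast_add_one_ne_zero n
    push_cast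
    field_simp

end Polynomial

/-- Applying `f - μ a` kills `v a` and rescales the other summands, which gives the induction. -/
theorem Submodule.mem_of_sum_mem_of_eigenvectors {K V ι : Type*} [Field K] [AddCommGroup V]
    [Module K V] {f : Module.End K V} {p : Submodule K V} (hp : ∀ x ∈ p, f x ∈ p)
    {s : Finset ι} {μ : ι → K} (hμ : Set.InjOn μ s) {v : ι → V}
    (hv : ∀ i ∈ s, f (v i) = μ i • v i) (hs : ∑ i ∈ s, v i ∈ p) : ∀ i ∈ s, v i ∈ p := by
  classical
  induction s using Finset.induction_on generalizing v with
  | empty => simp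
  | insert a t hat ih =>
    have hv' (i) (hi : i ∈ t) : f (v i) = μ i • v i := hv i (Finset.mem_insert_of_mem hi)
    have hw : ∑ i ∈ t, (μ i - μ a) • v i ∈ p := by
      have := p.sub_mem (hp _ hs) (p.smul_mem (μ a) hs)
      rw [Finset.sum_insert hat, map_add, map_sum, smul_add, Finset.smul_sum,
        hv a (Finset.mem_insert_self a t), add_sub_add_comm, sub_self, zero_add,
        ← Finset.sum_sub_distrib] at this
      rwa [Finset.sum_congr rfl fun i hi => by rw [sub_smul, ← hv' i hi]]
    have ht (i) (hi : i ∈ t) : v i ∈ p := by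
      have hne : μ i - μ a ≠ 0 := sub_ne_zero.mpr fun h =>
        hat (hμ (Finset.mem_insert_of_mem hi) (Finset.mem_insert_self a t) h ▸ hi)
      refine (p.smul_mem_iff hne).mp (ih (hμ.mono (Finset.subset_insert a t))
        (fun i hi => ?_) hw i hi)
      rw [map_smul, hv' i hi, smul_comm]
    intro i hi
    rcases Finset.mem_insert.mp hi with rfl | hi
    · rw [Finset.sum_insert hat] at hs
      simpa using p.sub_mem hs (p.sum_mem ht)
    · exact ht i hi

namespace SphericalRankOne

open Polynomial

local notation "𝒟" => Module.End ℂ LaurentC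

theorem ext_T {D E : 𝒟} (h : ∀ n : ℤ, D (T n) = E (T n)) : D = E :=
  AddMonoidAlgebra.lhom_ext' fun n => LinearMap.ext_ring (h n)

theorem euler_T (n : ℤ) : euler (T n) = (n : ℂ) • T n := by
  show (AddMonoidAlgebra.coeffLinearEquiv ℂ).symm (Finsupp.lsum ℂ
    (fun k : ℤ => (k : ℂ) • Finsupp.lsingle (M := ℂ) (R := ℂ) k) (Finsupp.single n 1)) = _
  rw [Finsupp.lsum_single]
  rfl

theorem aeval_euler_T (q : ℂ[X]) (n : ℤ) : aeval euler q (T n) = q.eval (n : ℂ) • T n :=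
  Module.End.aeval_apply_of_hasEigenvector
    ⟨Module.End.mem_eigenspace_iff.mpr (euler_T n), isUnit_T n |>.ne_zero⟩

def homOp (d : ℤ) : ℂ[X] →ₗ[ℂ] 𝒟 :=
  LinearMap.mulLeft ℂ (mulOpL (T d)) ∘ₗ (aeval euler).toLinearMap

theorem homOp_apply (d : ℤ) (q : ℂ[X]) : homOp d q = mulOpL (T d) * aeval euler q := rfl

theorem homOp_T (d : ℤ) (q : ℂ[X]) (n : ℤ) : homOp d q (T n) = q.eval (n : ℂ) • T (n + d) := by
  rw [homOp_apply, Module.End.mul_apply, aeval_euler_T, map_smul, mulOpL,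
    LinearMap.mulLeft_apply, ← T_add, add_comm]

theorem homOp_mul (d e : ℤ) (q r : ℂ[X]) :
    homOp d q * homOp e r = homOp (d + e) (r * q.comp (X + Polynomial.C (e : ℂ))) := by
  refine ext_T fun n => ?_
  rw [Module.End.mul_apply, homOp_T, map_smul, homOp_T, homOp_T, smul_smul, eval_mul, eval_comp]
  simp [add_assoc, add_comm e d]

def homSum : (ℤ →₀ ℂ[X]) →ₗ[ℂ] 𝒟 := Finsupp.lsum ℂ homOp

theorem homSum_apply (f : ℤ →₀ ℂ[X]) : homSum f = f.sum fun d q => homOp d q :=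
  Finsupp.lsum_apply ℂ homOp f

theorem homSum_single (d : ℤ) (q : ℂ[X]) : homSum (Finsupp.single d q) = homOp d q :=
  Finsupp.lsum_single ℂ homOp d q

theorem coeff_homSum_T (f : ℤ →₀ ℂ[X]) (n d : ℤ) :
    (homSum f (T n)).coeff (n + d) = (f d).eval (n : ℂ) := by
  rw [homSum_apply, LinearMap.finsupp_sum_apply]
  simp only [homOp_T, Finsupp.sum, AddMonoidAlgebra.coeff_sum, Finsupp.finsetSum_apply]
  simp +contextual [T_apply]

theorem homSum_injective : Function.Injective homSum := by
  refine (injective_iff_map_eq_zero _).mpr fun f hf => Finsupp.ext fun d =>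
    eq_zero_of_forall_eval_intCast_eq_zero fun n => ?_
  rw [← coeff_homSum_T, hf]
  rfl

theorem homOp_injective (d : ℤ) : Function.Injective (homOp d) := fun q r h =>
  Finsupp.single_injective d <| homSum_injective <| by rwa [homSum_single, homSum_single]

theorem mulOpL_eq_lmul : mulOpL = Algebra.lmul ℂ LaurentC := rfl

theorem mulOpL_T_eq_homOp (d : ℤ) : mulOpL (T d) = homOp d 1 := by
  rw [homOp_apply, map_one, mul_one]

theorem mulOpL_mem_range_homSum (a : LaurentC) : mulOpL a ∈ LinearMap.range homSum := by
  induction a using LaurentPolynomial.induction_on' with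
  | add p q hp hq => rw [mulOpL_eq_lmul, map_add]; exact add_mem hp hq
  | C_mul_T n a =>
    rw [← LaurentPolynomial.smul_eq_C_mul, mulOpL_eq_lmul, map_smul, ← mulOpL_eq_lmul,
      mulOpL_T_eq_homOp]
    exact ⟨Finsupp.single n (a • 1), by rw [homSum_single, map_smul]⟩

theorem eq_mulOpL_apply_one {D : 𝒟} (h : ∀ r, D * mulOpL r = mulOpL r * D) :
    D = mulOpL (D 1) := by
  refine LinearMap.ext fun r => ?_
  have := congrArg (fun E : 𝒟 => E 1) (h r)
  simp only [Module.End.mul_apply, mulOpL, LinearMap.mulLeft_apply, mul_one] at this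
  rw [this, mulOpL, LinearMap.mulLeft_apply, mul_comm]

theorem commute_mulOpL_of_commute_T_one {G : 𝒟} (h : Commute G (mulOpL (T 1)))
    (r : LaurentC) : Commute G (mulOpL r) := by
  have hT : ∀ m n : ℤ, mulOpL (T m) * mulOpL (T n) = mulOpL (T (m + n)) := fun m n => by
    rw [mulOpL_eq_lmul, ← map_mul, T_add]
  let x : 𝒟ˣ := ⟨mulOpL (T 1), mulOpL (T (-1)),
    by rw [hT, add_neg_cancel, T_zero, mulOpL_eq_lmul, map_one],
    by rw [hT, neg_add_cancel, T_zero, mulOpL_eq_lmul, map_one]⟩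
  have hx_inv : Commute G (mulOpL (T (-1))) := Commute.units_inv_right (u := x) h
  have hT_pow : ∀ (k : ℤ) (m : ℕ), mulOpL (T (m * k)) = mulOpL (T k) ^ m := fun k m => by
    rw [mulOpL_eq_lmul, ← map_pow, T_pow]
  have hT_comm (n : ℤ) : Commute G (mulOpL (T n)) := by
    obtain ⟨m, rfl | rfl⟩ := Int.eq_nat_or_neg n
    · simpa [← hT_pow] using h.pow_right m
    · simpa [← hT_pow] using hx_inv.pow_right m
  induction r using LaurentPolynomial.induction_on' with
  | add p q hp hq => rw [mulOpL_eq_lmul, map_add]; exact hp.add_right hq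
  | C_mul_T n a =>
    rw [← LaurentPolynomial.smul_eq_C_mul, mulOpL_eq_lmul, map_smul]
    exact (hT_comm n).smul_right a

theorem exists_mem_range_homSum_commutator_eq (f : ℤ →₀ ℂ[X]) :
    ∃ F ∈ LinearMap.range homSum, F * mulOpL (T 1) - mulOpL (T 1) * F = homSum f := by
  induction f using Finsupp.induction_linear with
  | zero => exact ⟨0, zero_mem _, by simp⟩
  | add f g hf hg =>
    obtain ⟨F, hF, hFf⟩ := hf
    obtain ⟨G, hG, hGg⟩ := hg
    exact ⟨F + G, add_mem hF hG, by rw [map_add, ← hFf, ← hGg]; noncomm_ring⟩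
  | single d q =>
    obtain ⟨Q, hQ⟩ := exists_comp_X_add_one_sub_eq q
    refine ⟨homOp (d - 1) Q, ⟨Finsupp.single (d - 1) Q, homSum_single _ _⟩, ?_⟩
    rw [homSum_single, mulOpL_T_eq_homOp, homOp_mul, homOp_mul, one_mul, one_comp, mul_one,
      sub_add_cancel, add_sub_cancel, ← map_sub, Int.cast_one, map_one, hQ]

theorem diffOpOrder_subset_range_homSum :
    ∀ N, diffOpOrder N ⊆ (LinearMap.range homSum : Set 𝒟)
  | 0, D, hD => eq_mulOpL_apply_one hD ▸ mulOpL_mem_range_homSum _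
  | N + 1, D, hD => by
    obtain ⟨f, hf⟩ := diffOpOrder_subset_range_homSum N (hD (T 1))
    obtain ⟨F, hF, hFf⟩ := exists_mem_range_homSum_commutator_eq f
    have hcomm : Commute (D - F) (mulOpL (T 1)) := by
      rw [Commute, SemiconjBy, ← sub_eq_zero]
      calc (D - F) * mulOpL (T 1) - mulOpL (T 1) * (D - F)
          = (D * mulOpL (T 1) - mulOpL (T 1) * D) - (F * mulOpL (T 1) - mulOpL (T 1) * F) := by
            simp only [sub_mul, mul_sub]; abel
        _ = 0 := by rw [hFf, hf, sub_self]
    have hDF := eq_mulOpL_apply_one fun r => (commute_mulOpL_of_commute_T_one hcomm r).eq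
    rw [← sub_add_cancel D F, hDF]
    exact add_mem (mulOpL_mem_range_homSum _) hF

theorem coeff_wAction (ω : ℂ) (v : LaurentC) (m : ℤ) :
    (wAction ω v).coeff m = ω ^ m * v.coeff m := by
  show ((AddMonoidAlgebra.coeffLinearEquiv ℂ).symm (Finsupp.lsum ℂ
    (fun k : ℤ => ω ^ k • Finsupp.lsingle (M := ℂ) (R := ℂ) k) v.coeff)).coeff m = _
  simp +contextual [Finsupp.lsum_apply, Finsupp.sum_apply, Finsupp.single_apply]

theorem eq_zero_of_commute_wAction {ω : ℂ} (hω : ω ≠ 0) {f : ℤ →₀ ℂ[X]}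
    (hc : Commute (wAction ω) (homSum f)) {d : ℤ} (hd : ω ^ d ≠ 1) : f d = 0 := by
  refine eq_zero_of_forall_eval_intCast_eq_zero fun n => ?_
  have h := congrArg (fun v : LaurentC => v.coeff (n + d)) (LinearMap.congr_fun hc.eq (T n))
  have hT : wAction ω (T n) = ω ^ n • T n := by
    ext m
    by_cases h : n = m <;> simp [coeff_wAction, T_apply, h]
  simp only [Module.End.mul_apply, coeff_wAction, hT, map_smul, AddMonoidAlgebra.coeff_smul_apply,
    coeff_homSum_T, smul_eq_mul, zpow_add₀ hω, mul_assoc] at h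
  have h' := mul_left_cancel₀ (zpow_ne_zero n hω) h
  by_contra he
  exact hd (mul_right_cancel₀ he (h'.trans (one_mul _).symm))

theorem homOp_zero_eq_aeval (q : ℂ[X]) : homOp 0 q = aeval euler q := by
  rw [homOp_apply, T_zero, mulOpL_eq_lmul, map_one, one_mul]

theorem commutator_euler_homOp (d : ℤ) (q : ℂ[X]) :
    euler * homOp d q - homOp d q * euler = (d : ℂ) • homOp d q := by
  have heu : euler = homOp 0 X := by rw [homOp_zero_eq_aeval, aeval_X]
  rw [heu, homOp_mul, homOp_mul, zero_add, add_zero, X_comp, Int.cast_zero, map_zero, add_zero,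
    comp_X, ← map_sub, ← map_smul, mul_add, mul_comm q X, add_sub_cancel_left, mul_comm,
    ← Polynomial.smul_eq_C_mul]

theorem homOp_mem_of_homSum_mem {R : Subalgebra ℂ 𝒟} (heu : euler ∈ R) {f : ℤ →₀ ℂ[X]}
    (hf : homSum f ∈ R) (d : ℤ) : homOp d (f d) ∈ R := by
  by_cases hd : d ∈ f.support
  · refine Submodule.mem_of_sum_mem_of_eigenvectors (p := Subalgebra.toSubmodule R)
      (f := LinearMap.mulLeft ℂ euler - LinearMap.mulRight ℂ euler)
      (fun x hx => R.sub_mem (R.mul_mem heu hx) (R.mul_mem hx heu)) Int.cast_injective.injOn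
      (fun d _ => commutator_euler_homOp d (f d)) ?_ d hd
    rwa [homSum_apply] at hf
  · rw [Finsupp.notMem_support_iff.mp hd, map_zero]
    exact zero_mem R

section Nabla

variable (ℓ : ℕ) (κ : ℕ → ℂ)

def nablaPoly : ℂ[X] :=
  ((List.range ℓ).map fun i =>
    X + Polynomial.C ((ℓ : ℂ) * κ i + (i : ℂ) + (ℓ : ℂ) * ((if i = 0 then 1 else 0) - 1))).prod

theorem nablaPoly_ne_zero : nablaPoly ℓ κ ≠ 0 :=
  List.prod_ne_zero fun h => by
    obtain ⟨i, -, hi⟩ := List.mem_map.mp h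
    exact X_add_C_ne_zero _ hi

theorem nabla_eq_homOp : nabla ℓ κ = homOp (-ℓ) (nablaPoly ℓ κ) := by
  rw [homOp_apply, nablaPoly, map_list_prod, List.map_map, nabla]
  congr 3
  funext i
  rw [Function.comp_apply, map_add, aeval_X, aeval_C, Algebra.algebraMap_eq_smul_one]
  rfl

theorem nabla_pow (j : ℕ) :
    nabla ℓ κ ^ j = homOp (-(j * ℓ : ℤ)) (shiftProd (nablaPoly ℓ κ) ℓ j) := by
  induction j with
  | zero => simp [shiftProd, homOp_zero_eq_aeval]
  | succ j ih =>
    rw [pow_succ', ih, nabla_eq_homOp, homOp_mul, shiftProd_succ]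
    congr 2
    · push_cast; ring
    · push_cast; rw [map_neg, ← sub_eq_add_neg]

variable {ℓ κ}

theorem aeval_euler_mem_Arank1 (q : ℂ[X]) : aeval euler q ∈ Arank1 ℓ κ :=
  Algebra.adjoin_mono (by simp) (aeval_mem_adjoin_singleton ℂ euler)

theorem homOp_natCast_mul_mem_Arank1 (m : ℕ) (q : ℂ[X]) : homOp (m * ℓ) q ∈ Arank1 ℓ κ := by
  rw [homOp_apply, ← T_pow, mulOpL_eq_lmul, map_pow]
  exact mul_mem (pow_mem (Algebra.subset_adjoin (by simp [zOp, mulOpL_eq_lmul])) m)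
    (aeval_euler_mem_Arank1 q)

theorem homOp_neg_mem_Arank1_of_dvd {j : ℕ} {q : ℂ[X]}
    (h : shiftProd (nablaPoly ℓ κ) ℓ j ∣ q) : homOp (-(j * ℓ : ℤ)) q ∈ Arank1 ℓ κ := by
  obtain ⟨g, rfl⟩ := h
  have : homOp (-(j * ℓ : ℤ)) (shiftProd (nablaPoly ℓ κ) ℓ j * g) =
      nabla ℓ κ ^ j * homOp 0 g := by
    rw [nabla_pow, homOp_mul]; simp [mul_comm]
  rw [this, homOp_zero_eq_aeval]
  exact mul_mem (pow_mem (Algebra.subset_adjoin (by simp)) j) (aeval_euler_mem_Arank1 g)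

theorem commutator_nabla_homOp (d : ℤ) (q : ℂ[X]) :
    nabla ℓ κ * homOp d q - homOp d q * nabla ℓ κ = homOp (d - ℓ)
      (q * (nablaPoly ℓ κ).comp (X + Polynomial.C (d : ℂ)) -
        nablaPoly ℓ κ * q.comp (X - Polynomial.C (ℓ : ℂ))) := by
  rw [nabla_eq_homOp, homOp_mul, homOp_mul, map_sub, neg_add_eq_sub, ← sub_eq_add_neg]
  push_cast
  rw [map_neg, ← sub_eq_add_neg]

theorem shiftProd_dvd_of_iterate_commutator_eq_zero (hℓ : 1 ≤ ℓ) {n j : ℕ} {q : ℂ[X]}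
    (h : (fun a => nabla ℓ κ * a - a * nabla ℓ κ)^[n] (homOp (-(j * ℓ : ℤ)) q) = 0) :
    shiftProd (nablaPoly ℓ κ) ℓ j ∣ q := by
  induction n generalizing j q with
  | zero =>
    rw [Function.iterate_zero_apply, ← map_zero (homOp _)] at h
    rw [homOp_injective _ h]
    exact dvd_zero _
  | succ n ih =>
    rw [Function.iterate_succ_apply, commutator_nabla_homOp,
      show -(j * ℓ : ℤ) - ℓ = -((j + 1 : ℕ) * ℓ : ℤ) by push_cast; ring] at h
    refine shiftProd_dvd_of_dvd_sub (nablaPoly_ne_zero ℓ κ) (Nat.cast_ne_zero.mpr (by omega)) ?_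
    convert ih h using 3
    push_cast
    rw [map_neg, ← sub_eq_add_neg]

theorem homOp_mem_Arank1 (hℓ : 1 ≤ ℓ) {d : ℤ} (hd : (ℓ : ℤ) ∣ d) {q : ℂ[X]}
    (hnil : ∃ n : ℕ, (fun a => nabla ℓ κ * a - a * nabla ℓ κ)^[n] (homOp d q) = 0) :
    homOp d q ∈ Arank1 ℓ κ := by
  obtain ⟨m, rfl⟩ := hd
  obtain ⟨k, rfl | rfl⟩ := Int.eq_nat_or_neg m
  · rw [mul_comm]
    exact homOp_natCast_mul_mem_Arank1 k q
  · rw [mul_neg, mul_comm] at hnil ⊢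
    obtain ⟨n, hn⟩ := hnil
    exact homOp_neg_mem_Arank1_of_dvd (shiftProd_dvd_of_iterate_commutator_eq_zero hℓ hn)

end Nabla

theorem exists_homSum_eq_of_mem_DregW {ℓ : ℕ} (hℓ : 1 ≤ ℓ) {ω : ℂ} (hω : IsPrimitiveRoot ω ℓ)
    {D : 𝒟} (hD : D ∈ DregW ω) : ∃ f, D = homSum f ∧ ∀ d ∈ f.support, (ℓ : ℤ) ∣ d := by
  obtain ⟨⟨N, hN⟩, hc⟩ := hD
  obtain ⟨f, rfl⟩ := diffOpOrder_subset_range_homSum N hN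
  refine ⟨f, rfl, fun d hd => ?_⟩
  by_contra h
  exact Finsupp.mem_support_iff.mp hd
    (eq_zero_of_commute_wAction (hω.ne_zero (by omega)) hc (mt (hω.zpow_eq_one_iff_dvd d).mp h))

end SphericalRankOne

theorem rank_one_spherical_maximal
    (ℓ : ℕ) (hℓ : 1 ≤ ℓ) (ω : ℂ) (hω : IsPrimitiveRoot ω ℓ) (κ : ℕ → ℂ)
    (R : Subalgebra ℂ (Module.End ℂ LaurentC))
    (hAR : Arank1 ℓ κ ≤ R)
    (hRD : (R : Set (Module.End ℂ LaurentC)) ⊆ DregW ω)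
    (hnil : ∀ r ∈ R, ∃ n : ℕ,
      (fun a => nabla ℓ κ * a - a * nabla ℓ κ)^[n] r = 0) :
    R = Arank1 ℓ κ := by
  refine le_antisymm (fun r hr => ?_) hAR
  obtain ⟨f, rfl, hf⟩ := SphericalRankOne.exists_homSum_eq_of_mem_DregW hℓ hω (hRD hr)
  rw [SphericalRankOne.homSum_apply]
  refine Subalgebra.sum_mem _ fun d hd => SphericalRankOne.homOp_mem_Arank1 hℓ (hf d hd) (hnil _ ?_)
  exact SphericalRankOne.homOp_mem_of_homSum_mem (hAR (Algebra.subset_adjoin (by simp))) hr d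

end
end
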